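/- Let λ > 0, r > 0 and let n₀ ≥ 0 be a natural number. Let (I_n)_{n≥1} be i.i.d. exponential random variables with rate λ, and let (N_n)_{n≥1} be i.i.d. random variables with P(N_n > m) = (1 - e^{-λ r})^m for every m ≥ 0 (cluster-size distribution), independent of (I_n). Let M = inf{n ≥ 1 : N_n > n₀} and B = Σ_{i=1}^{M-1} I_i. Then E[B] = (1/λ) · ((1 - e^{-λ r})^{-n₀} - 1). -/

import Mathlib

/-!
Write `q = 1 - e^{-λr}`. Since the summands are nonnegative,
`B = ∑_{k ≥ 0} I_{k+1} · 1{k + 1 < M}` and the expectation may be taken term by term.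
The event `{k + 1 < M}` says that clusters `1, …, k + 1` are small and some later cluster is
large; it is a function of `(N n)` alone, hence independent of `I_{k+1}`, and it has probability
`(1 - q^{n₀})^{k+1}` because a large cluster occurs almost surely. With `E[I_{k+1}] = 1/λ` the
geometric series gives `(1/λ)·(1 - q^{n₀}) / q^{n₀}`.
-/

open MeasureTheory ProbabilityTheory Real
open scoped ENNReal

lemma expMeasure_Iio_zero (lam : ℝ) : expMeasure lam (Set.Iio 0) = 0 := by
  rw [expMeasure, gammaMeasure, withDensity_apply _ measurableSet_Iio]
  exact lintegral_gammaPDF_of_nonpos le_rfl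

-- `x` times the exponential density is `λ⁻¹` times the Gamma(2, λ) density.
lemma lintegral_ofReal_expMeasure {lam : ℝ} (hlam : 0 < lam) :
    ∫⁻ x, ENNReal.ofReal x ∂expMeasure lam = ENNReal.ofReal (1 / lam) := by
  have hdens : ∀ x, gammaPDF 1 lam x * ENNReal.ofReal x =
      ENNReal.ofReal (1 / lam) * gammaPDF 2 lam x := by
    intro x
    rcases lt_or_ge x 0 with hx | hx
    · simp [gammaPDF_of_neg hx]
    · rw [gammaPDF_of_nonneg hx, gammaPDF_of_nonneg hx, ← ENNReal.ofReal_mul (by positivity),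
        ← ENNReal.ofReal_mul (by positivity)]
      congr 1
      norm_num [Real.Gamma_two, Real.Gamma_one]
      field_simp
  rw [expMeasure, gammaMeasure, lintegral_withDensity_eq_lintegral_mul _ (f := gammaPDF 1 lam)
      (measurable_gammaPDFReal 1 lam).ennreal_ofReal ENNReal.measurable_ofReal]
  simp only [Pi.mul_apply, hdens]
  rw [lintegral_const_mul _ (f := gammaPDF 2 lam) (measurable_gammaPDFReal 2 lam).ennreal_ofReal,
    lintegral_gammaPDF_eq_one two_pos hlam, mul_one]

-- The second conjunct is forced by the convention `sInf ∅ = 0`.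
lemma succ_lt_sInf_iff (p : ℕ → Prop) (k : ℕ) :
    k + 1 < sInf {n | 1 ≤ n ∧ p n} ↔ (∀ n < k + 1, ¬ p (n + 1)) ∧ ∃ n, p (n + 1) := by
  constructor
  · intro h
    have hne : {n | 1 ≤ n ∧ p n}.Nonempty := by
      by_contra hemp
      rw [Set.not_nonempty_iff_eq_empty.1 hemp, Nat.sInf_empty] at h
      omega
    obtain ⟨m, hm1, hm⟩ := hne
    refine ⟨fun n hn hp => ?_, m - 1, by rwa [Nat.sub_add_cancel hm1]⟩
    have := Nat.sInf_le (show n + 1 ∈ {n | 1 ≤ n ∧ p n} from ⟨by omega, hp⟩)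
    omega
  · rintro ⟨hnot, m, hm⟩
    obtain ⟨h1, hp⟩ := Nat.sInf_mem (s := {n | 1 ≤ n ∧ p n}) ⟨m + 1, by omega, hm⟩
    by_contra hle
    exact hnot (sInf {n | 1 ≤ n ∧ p n} - 1) (by omega) (by rwa [Nat.sub_add_cancel h1])

lemma ENNReal.ofReal_sum_Ico_one_eq_tsum {f : ℕ → ℝ} (hf : ∀ n, 0 ≤ f (n + 1)) (m : ℕ) :
    ENNReal.ofReal (∑ i ∈ Finset.Ico 1 m, f i) =
      ∑' k, if k + 1 < m then ENNReal.ofReal (f (k + 1)) else 0 := by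
  rw [Finset.sum_Ico_eq_sum_range, ENNReal.ofReal_sum_of_nonneg fun k _ => by
      rw [add_comm]; exact hf k,
    tsum_eq_sum (s := Finset.range (m - 1)) fun k hk => by
      rw [Finset.mem_range] at hk; rw [if_neg (by omega)]]
  refine Finset.sum_congr rfl fun k hk => ?_
  rw [Finset.mem_range] at hk
  rw [if_pos (by omega), add_comm]

section Measure

variable {Ω β γ : Type*} [MeasurableSpace Ω] [MeasurableSpace β] [MeasurableSpace γ]
  {P : Measure Ω}

lemma ProbabilityTheory.iIndepFun.measure_biInter_range_preimage {X : ℕ → Ω → β}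
    (h : iIndepFun X P) {s : Set β} (hs : MeasurableSet s) {a : ℝ≥0∞}
    (ha : ∀ n, P (X n ⁻¹' s) = a) (j : ℕ) :
    P (⋂ n ∈ Finset.range j, X n ⁻¹' s) = a ^ j := by
  rw [h.meas_biInter fun n _ => ⟨s, hs, rfl⟩, Finset.prod_congr rfl fun n _ => ha n,
    Finset.prod_const, Finset.card_range]

lemma ProbabilityTheory.iIndepFun.measure_iInter_preimage_eq_zero {X : ℕ → Ω → β}
    (h : iIndepFun X P) {s : Set β} (hs : MeasurableSet s) {a : ℝ≥0∞}
    (ha : ∀ n, P (X n ⁻¹' s) = a) (ha1 : a < 1) :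
    P (⋂ n, X n ⁻¹' s) = 0 :=
  le_antisymm (ge_of_tendsto' (ENNReal.tendsto_pow_atTop_nhds_zero_of_lt_one ha1) fun j =>
    (measure_mono (Set.subset_iInter₂ fun n _ => Set.iInter_subset _ n)).trans_eq
      (h.measure_biInter_range_preimage hs ha j)) bot_le

lemma ProbabilityTheory.IndepFun.setLIntegral_preimage {X : Ω → β} {Y : Ω → γ}
    (h : IndepFun X Y P) (hX : Measurable X) (hY : Measurable Y) {f : β → ℝ≥0∞}
    (hf : Measurable f) {S : Set γ} (hS : MeasurableSet S) :
    ∫⁻ ω in Y ⁻¹' S, f (X ω) ∂P = (∫⁻ ω, f (X ω) ∂P) * P (Y ⁻¹' S) := by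
  have hind : (Y ⁻¹' S).indicator (f ∘ X) = f ∘ X * S.indicator 1 ∘ Y := by
    ext ω
    by_cases hω : Y ω ∈ S <;> simp [hω]
  rw [← lintegral_indicator (hY hS), show (fun ω => f (X ω)) = f ∘ X from rfl, hind,
    lintegral_mul_eq_lintegral_mul_lintegral_of_indepFun (hf.comp hX)
      ((measurable_one.indicator hS).comp hY)
      (h.comp hf (measurable_one.indicator hS)), ← lintegral_indicator_one (hY hS)]
  rfl

lemma ae_nonneg_of_map_eq_expMeasure {X : Ω → ℝ} (hX : Measurable X) {lam : ℝ}
    (h : P.map X = expMeasure lam) : 0 ≤ᵐ[P] X := by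
  have hneg : P (X ⁻¹' Set.Iio 0) = 0 := by
    rw [← Measure.map_apply hX measurableSet_Iio, h, expMeasure_Iio_zero]
  filter_upwards [measure_eq_zero_iff_ae_notMem.1 hneg] with ω hω
  simpa using hω

lemma lintegral_ofReal_of_map_eq_expMeasure {X : Ω → ℝ} (hX : Measurable X) {lam : ℝ}
    (hlam : 0 < lam) (h : P.map X = expMeasure lam) :
    ∫⁻ ω, ENNReal.ofReal (X ω) ∂P = ENNReal.ofReal (1 / lam) := by
  rw [← lintegral_map ENNReal.measurable_ofReal hX, h, lintegral_ofReal_expMeasure hlam]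

lemma integral_sum_Ico_one_eq_toReal_tsum {X : ℕ → Ω → ℝ} (hX : ∀ n, Measurable (X n))
    (hX0 : ∀ n, 0 ≤ᵐ[P] X (n + 1)) {T : Ω → ℕ}
    (hT : ∀ k, MeasurableSet {ω | k + 1 < T ω}) :
    ∫ ω, ∑ i ∈ Finset.Ico 1 (T ω), X i ω ∂P =
      (∑' k, ∫⁻ ω in {ω | k + 1 < T ω}, ENNReal.ofReal (X (k + 1) ω) ∂P).toReal := by
  set g : ℕ → Ω → ℝ≥0∞ := fun k =>
    {ω | k + 1 < T ω}.indicator fun ω => ENNReal.ofReal (X (k + 1) ω)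
  have hg : ∀ k, Measurable (g k) := fun k =>
    (ENNReal.measurable_ofReal.comp (hX _)).indicator (hT k)
  have hsum : ∀ᵐ ω ∂P, 0 ≤ ∑ i ∈ Finset.Ico 1 (T ω), X i ω ∧
      ENNReal.ofReal (∑ i ∈ Finset.Ico 1 (T ω), X i ω) = ∑' k, g k ω := by
    filter_upwards [ae_all_iff.2 hX0] with ω hω
    refine ⟨Finset.sum_nonneg fun i hi => ?_, ?_⟩
    · obtain ⟨k, rfl⟩ := Nat.exists_eq_add_one.2 (Finset.mem_Ico.1 hi).1
      exact hω k
    · simp only [ENNReal.ofReal_sum_Ico_one_eq_tsum (f := fun i => X i ω) hω, g,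
        Set.indicator_apply, Set.mem_ofPred_eq]
  have hfin : ∀ᵐ ω ∂P, ∑' k, g k ω < ∞ :=
    hsum.mono fun ω hω => hω.2 ▸ ENNReal.ofReal_lt_top
  rw [integral_congr_ae (hsum.mono fun ω hω => (ENNReal.toReal_ofReal hω.1).symm.trans
      (congrArg ENNReal.toReal hω.2)),
    integral_toReal (Measurable.tsum hg).aemeasurable hfin,
    lintegral_tsum fun k => (hg k).aemeasurable]
  simp only [g, lintegral_indicator (hT _)]

end Measure

lemma exists_measurableSet_setOf_succ_lt_sInf_eq_preimage {Ω : Type*} (N : ℕ → Ω → ℕ)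
    (n₀ k : ℕ) :
    ∃ S : Set (ℕ → ℕ), MeasurableSet S ∧
      {ω | k + 1 < sInf {n | 1 ≤ n ∧ n₀ < N n ω}} =
        (fun ω n => N (n + 1) ω) ⁻¹' S := by
  refine ⟨(⋂ n ∈ Finset.range (k + 1), {w | w n ≤ n₀}) \ ⋂ n, {w | w n ≤ n₀},
    (Finset.measurableSet_biInter _ fun n _ => measurable_pi_apply n measurableSet_Iic).diff
      (MeasurableSet.iInter fun n => measurable_pi_apply n measurableSet_Iic), ?_⟩
  ext ω
  simp [succ_lt_sInf_iff]

lemma measure_setOf_succ_lt_sInf {Ω : Type*} [MeasurableSpace Ω] {P : Measure Ω}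
    {N : ℕ → Ω → ℕ} (hN : iIndepFun (fun n ω => N (n + 1) ω) P) {n₀ : ℕ}
    {a : ℝ≥0∞}
    (ha : ∀ n, P {ω | N (n + 1) ω ≤ n₀} = a) (ha1 : a < 1) (k : ℕ) :
    P {ω | k + 1 < sInf {n | 1 ≤ n ∧ n₀ < N n ω}} = a ^ (k + 1) := by
  have hsplit : {ω | k + 1 < sInf {n | 1 ≤ n ∧ n₀ < N n ω}} =
      (⋂ n ∈ Finset.range (k + 1), (fun ω => N (n + 1) ω) ⁻¹' Set.Iic n₀) \
        ⋂ n, (fun ω => N (n + 1) ω) ⁻¹' Set.Iic n₀ := by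
    ext ω
    simp [succ_lt_sInf_iff]
  rw [hsplit, measure_sdiff_null (hN.measure_iInter_preimage_eq_zero measurableSet_Iic ha ha1),
    hN.measure_biInter_range_preimage measurableSet_Iic ha]

lemma ENNReal.toReal_tsum_mul_one_sub_ofReal_pow_succ {c s : ℝ} (hc : 0 ≤ c) (hs : 0 < s)
    (hs1 : s ≤ 1) :
    (∑' k : ℕ, ENNReal.ofReal c * (1 - ENNReal.ofReal s) ^ (k + 1)).toReal =
      c * (s⁻¹ - 1) := by
  have hsub : 1 - ENNReal.ofReal s = ENNReal.ofReal (1 - s) := by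
    rw [ENNReal.ofReal_sub _ hs.le, ENNReal.ofReal_one]
  have hsum : ∑' k : ℕ, (1 - ENNReal.ofReal s) ^ (k + 1) = ENNReal.ofReal ((1 - s) / s) := by
    rw [ENNReal.tsum_geometric_add_one,
      ENNReal.sub_sub_cancel ENNReal.one_ne_top (ENNReal.ofReal_le_one.2 hs1), hsub,
      ← ENNReal.ofReal_inv_of_pos hs, ← ENNReal.ofReal_mul (by linarith), div_eq_mul_inv]
  rw [ENNReal.tsum_mul_left, hsum, ← ENNReal.ofReal_mul hc,
    ENNReal.toReal_ofReal (mul_nonneg hc (div_nonneg (by linarith) hs.le))]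
  field_simp

theorem expected_road_length_fixed_threshold_general
    {Ω : Type*} [MeasurableSpace Ω] (P : Measure Ω) [IsProbabilityMeasure P]
    (lam r : ℝ) (hlam : 0 < lam) (hr : 0 < r) (n₀ : ℕ)
    (I : ℕ → Ω → ℝ) (hImeas : ∀ n, Measurable (I n))
    (hIdist : ∀ n : ℕ, P.map (I (n + 1)) = expMeasure lam)
    (N : ℕ → Ω → ℕ) (hNmeas : ∀ n, Measurable (N n))
    (hNindep : iIndepFun (fun n ω => N (n + 1) ω) P)
    (hNdist : ∀ n m : ℕ,
      P {ω | m < N (n + 1) ω} = ENNReal.ofReal ((1 - Real.exp (-lam * r)) ^ m))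
    (hIN : IndepFun (fun ω => fun n : ℕ => I (n + 1) ω)
      (fun ω => fun n : ℕ => N (n + 1) ω) P)
    (M : Ω → ℕ) (hM : ∀ ω, M ω = sInf {n : ℕ | 1 ≤ n ∧ n₀ < N n ω})
    (B : Ω → ℝ) (hB : ∀ ω, B ω = ∑ i ∈ Finset.Ico 1 (M ω), I i ω) :
    ∫ ω, B ω ∂P =
      (1 / lam) * ((1 - Real.exp (-lam * r)) ^ (-(n₀ : ℤ)) - 1) := by
  simp only [hB, hM]
  have hq0 : 0 < 1 - exp (-lam * r) := sub_pos.2 (exp_lt_one_iff.2 (by nlinarith))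
  have hq1 : 1 - exp (-lam * r) ≤ 1 := sub_le_self _ (exp_pos _).le
  set s := (1 - exp (-lam * r)) ^ n₀
  have hNsmall : ∀ n, P {ω | N (n + 1) ω ≤ n₀} = 1 - ENNReal.ofReal s := fun n => by
    rw [← hNdist n n₀, ← prob_compl_eq_one_sub
      (show MeasurableSet {ω | n₀ < N (n + 1) ω} from hNmeas _ measurableSet_Ioi)]
    simp only [Set.compl_ofPred, not_lt]
  have hNsmall1 : 1 - ENNReal.ofReal s < 1 :=
    ENNReal.sub_lt_self ENNReal.one_ne_top one_ne_zero (ENNReal.ofReal_pos.2 (pow_pos hq0 n₀)).ne'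
  have hNvec : Measurable fun ω n => N (n + 1) ω := measurable_pi_lambda _ fun n => hNmeas _
  have hterm : ∀ k, ∫⁻ ω in {ω | k + 1 < sInf {n | 1 ≤ n ∧ n₀ < N n ω}},
      ENNReal.ofReal (I (k + 1) ω) ∂P =
        ENNReal.ofReal (1 / lam) * (1 - ENNReal.ofReal s) ^ (k + 1) := by
    intro k
    obtain ⟨S, hS, hSeq⟩ := exists_measurableSet_setOf_succ_lt_sInf_eq_preimage N n₀ k
    rw [hSeq, hIN.setLIntegral_preimage (measurable_pi_lambda _ fun n => hImeas _) hNvec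
        (f := fun v => ENNReal.ofReal (v k))
        (ENNReal.measurable_ofReal.comp (measurable_pi_apply k)) hS, ← hSeq,
      measure_setOf_succ_lt_sInf hNindep hNsmall hNsmall1,
      lintegral_ofReal_of_map_eq_expMeasure (hImeas _) hlam (hIdist k)]
  rw [integral_sum_Ico_one_eq_toReal_tsum hImeas
      (fun n => ae_nonneg_of_map_eq_expMeasure (hImeas _) (hIdist n))
      (fun k => by
        obtain ⟨S, hS, hSeq⟩ := exists_measurableSet_setOf_succ_lt_sInf_eq_preimage N n₀ k
        exact hSeq ▸ hNvec hS),
    tsum_congr hterm, ENNReal.toReal_tsum_mul_one_sub_ofReal_pow_succ (by positivity)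
      (pow_pos hq0 n₀) (pow_le_one₀ hq0.le hq1), zpow_neg, zpow_natCast]

/-- **Expected road length to bridge a gap (fixed threshold).** Westbound clusters have
i.i.d. sizes `N 1, N 2, …` with `P(N n > m) = (1 - e^{-λr})^m` and are separated by
i.i.d. exponential(`lam`) distances `I 1, I 2, …`, the two families being independent.
If `M = inf {n ≥ 1 : N n > n₀}` and `B = ∑_{i=1}^{M-1} I i`, then
`E[B] = (1/λ)·((1 - e^{-λr})^{-n₀} - 1)`. -/
theorem expected_road_length_fixed_threshold
    {Ω : Type*} [MeasurableSpace Ω] (P : Measure Ω) [IsProbabilityMeasure P]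
    (lam r : ℝ) (hlam : 0 < lam) (hr : 0 < r) (n₀ : ℕ)
    (I : ℕ → Ω → ℝ) (hImeas : ∀ n, Measurable (I n))
    (hIindep : iIndepFun (fun n ω => I (n + 1) ω) P)
    (hIdist : ∀ n : ℕ, P.map (I (n + 1)) = expMeasure lam)
    (N : ℕ → Ω → ℕ) (hNmeas : ∀ n, Measurable (N n))
    (hNindep : iIndepFun (fun n ω => N (n + 1) ω) P)
    (hNdist : ∀ n m : ℕ,
      P {ω | m < N (n + 1) ω} = ENNReal.ofReal ((1 - Real.exp (-lam * r)) ^ m))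
    (hIN : IndepFun (fun ω => fun n : ℕ => I (n + 1) ω)
      (fun ω => fun n : ℕ => N (n + 1) ω) P)
    (M : Ω → ℕ) (hM : ∀ ω, M ω = sInf {n : ℕ | 1 ≤ n ∧ n₀ < N n ω})
    (B : Ω → ℝ) (hB : ∀ ω, B ω = ∑ i ∈ Finset.Ico 1 (M ω), I i ω) :
    ∫ ω, B ω ∂P =
      (1 / lam) * ((1 - Real.exp (-lam * r)) ^ (-(n₀ : ℤ)) - 1) :=
  expected_road_length_fixed_threshold_general P lam r hlam hr n₀ I hImeas hIdist N hNmeas hNindep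
    hNdist hIN M hM B hB
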